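/- Let M(λ) ∈ F[λ]^{p×q} (F = ℝ or ℂ) be any minimal basis with p < q, and let d be any integer with d > deg(M). Then for every ε > 0 there exists a polynomial matrix M̃(λ) ∈ F[λ]^{p×q}_d that is not a minimal basis and satisfies ‖S_1(M) − S_1(M̃)‖_2 < ε, where both M and M̃ are regarded as elements of F[λ]^{p×q}_d; that is, minimal bases are never robust under perturbations that may increase their degree. -/

import Mathlib

open Polynomial Matrix

noncomputable section

variable {F : Type*} [Field F]

/-- The rows of a polynomial matrix, viewed as vectors of rational functions. -/
def ratRow {p q : ℕ} (M : Matrix (Fin p) (Fin q) F[X]) (i : Fin p) :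
    Fin q → RatFunc F :=
  fun j => algebraMap F[X] (RatFunc F) (M i j)

/-- The rational vector subspace spanned by the rows of a polynomial matrix. -/
def rowSpan {p q : ℕ} (M : Matrix (Fin p) (Fin q) F[X]) :
    Submodule (RatFunc F) (Fin q → RatFunc F) :=
  Submodule.span (RatFunc F) (Set.range (ratRow M))

/-- The degree of the `i`-th row of a polynomial matrix. -/
def rowDeg {p q : ℕ} (M : Matrix (Fin p) (Fin q) F[X]) (i : Fin p) : ℕ :=
  Finset.univ.sup fun j => (M i j).natDegree

/-- The rows of `M` form a polynomial basis of the rational subspace `V` whose sum of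
row degrees is minimal among all polynomial bases of `V`. -/
def IsMinimalBasisOf {p q : ℕ} (V : Submodule (RatFunc F) (Fin q → RatFunc F))
    (M : Matrix (Fin p) (Fin q) F[X]) : Prop :=
  LinearIndependent (RatFunc F) (ratRow M) ∧ rowSpan M = V ∧
    ∀ M' : Matrix (Fin p) (Fin q) F[X],
      LinearIndependent (RatFunc F) (ratRow M') → rowSpan M' = V →
        ∑ i, rowDeg M i ≤ ∑ i, rowDeg M' i

/-- A polynomial matrix is a minimal basis if its rows form a minimal basis of the
rational subspace they span. -/
def IsMinimalBasis {p q : ℕ} (M : Matrix (Fin p) (Fin q) F[X]) : Prop :=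
  IsMinimalBasisOf (rowSpan M) M

/-- A polynomial matrix viewed as a matrix of rational functions. -/
def ratMat {p q : ℕ} (M : Matrix (Fin p) (Fin q) F[X]) :
    Matrix (Fin p) (Fin q) (RatFunc F) :=
  M.map (algebraMap F[X] (RatFunc F))

/-- The right null-space over `F(λ)` of a polynomial matrix. -/
def rightNullSpace {p q : ℕ} (M : Matrix (Fin p) (Fin q) F[X]) :
    Submodule (RatFunc F) (Fin q → RatFunc F) :=
  LinearMap.ker (Matrix.mulVecLin (ratMat M))

/-- The `k`-th Sylvester matrix of a polynomial matrix regarded as having degree at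
most `e`: the block-Toeplitz matrix with `k` block columns whose `j`-th block column
carries the coefficients `M_0, …, M_e` in block rows `j, …, j+e` and zeros elsewhere. -/
def sylv {p q : ℕ} (e k : ℕ) (M : Matrix (Fin p) (Fin q) F[X]) :
    Matrix (Fin (k + e) × Fin p) (Fin k × Fin q) F :=
  fun r c =>
    if (c.1 : ℕ) ≤ (r.1 : ℕ) ∧ (r.1 : ℕ) ≤ (c.1 : ℕ) + e then
      (M r.2 c.2).coeff ((r.1 : ℕ) - (c.1 : ℕ))
    else 0

/-- `M`, regarded as a polynomial matrix of degree at most `e`, has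
full-Sylvester-rank if every Sylvester matrix `S_k`, `k ≥ 1`, has full rank. -/
def HasFullSylvesterRank {p q : ℕ} (e : ℕ) (M : Matrix (Fin p) (Fin q) F[X]) : Prop :=
  ∀ k : ℕ, 1 ≤ k → (sylv e k M).rank = min ((k + e) * p) (k * q)

/-- The `k`-th coefficient matrix of a polynomial matrix. -/
def coeffMat {p q : ℕ} (k : ℕ) (M : Matrix (Fin p) (Fin q) F[X]) :
    Matrix (Fin p) (Fin q) F :=
  fun i j => (M i j).coeff k

/-- The highest-row-degree coefficient matrix: its `i`-th row is the coefficient of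
`λ^{d_i}` in the `i`-th row of `M`, where `d_i` is the `i`-th row degree. -/
def highRowMat {p q : ℕ} (M : Matrix (Fin p) (Fin q) F[X]) :
    Matrix (Fin p) (Fin q) F :=
  fun i j => (M i j).coeff (rowDeg M i)

/-- The `e`-reversal of a polynomial matrix: `rev_e P(λ) = λ^e P(1/λ)`. -/
def revMat {p q : ℕ} (e : ℕ) (P : Matrix (Fin p) (Fin q) F[X]) :
    Matrix (Fin p) (Fin q) F[X] :=
  fun i j => (P i j).reflect e


variable {𝕜 : Type*} [RCLike 𝕜]

/-- The spectral norm (largest singular value) of a matrix. -/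
def sNorm {a b : Type*} [Fintype a] [Fintype b] [DecidableEq b]
    (A : Matrix a b 𝕜) : ℝ :=
  ‖LinearMap.toContinuousLinearMap (Matrix.toEuclideanLin A)‖

/-- The Frobenius norm of a matrix. -/
def fNorm {a b : Type*} [Fintype a] [Fintype b] (A : Matrix a b 𝕜) : ℝ :=
  Real.sqrt (∑ i, ∑ j, ‖A i j‖ ^ 2)

/-- The `j`-th largest singular value of a matrix (`j = 1, 2, …`), via the
Courant–Fischer variational characterization. -/
def singVal {a b : Type*} [Fintype a] [Fintype b] [DecidableEq b]
    (A : Matrix a b 𝕜) (j : ℕ) : ℝ :=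
  sSup {r : ℝ | ∃ V : Submodule 𝕜 (EuclideanSpace 𝕜 b),
    Module.finrank 𝕜 V = j ∧ ∀ x ∈ V, r * ‖x‖ ≤ ‖Matrix.toEuclideanLin A x‖}

/-!
Multiplying one row of `M` by `1 + δ λ^s` with `s = d - deg(row) > 0` multiplies that row by a
unit of `F(λ)`, so the rows stay a basis of the same rational subspace, while the sum of the row
degrees grows by `s`: the result is not minimal. Its degree is still at most `d`, and its first
Sylvester matrix differs from `S_1(M)` by `δ` times a fixed matrix, so it is as close to `M` as
we like.
-/

theorem Submodule.span_range_units_smul {R M ι : Type*} [Semiring R] [AddCommMonoid M]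
    [Module R M] (w : ι → Rˣ) (v : ι → M) :
    Submodule.span R (Set.range (w • v)) = Submodule.span R (Set.range v) := by
  simp only [Submodule.span_range_eq_iSup, Pi.smul_apply', Submodule.span_singleton_group_smul_eq]

section RowOperations

variable {p q : ℕ} (M : Matrix (Fin p) (Fin q) F[X]) (i : Fin p)

theorem natDegree_le_rowDeg (j : Fin q) : (M i j).natDegree ≤ rowDeg M i :=
  Finset.le_sup (f := fun j => (M i j).natDegree) (Finset.mem_univ j)

theorem exists_ne_zero_natDegree_eq_rowDeg (h : M i ≠ 0) :
    ∃ j, M i j ≠ 0 ∧ (M i j).natDegree = rowDeg M i := by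
  obtain ⟨j₀, hj₀⟩ := Function.ne_iff.mp h
  obtain ⟨j, -, hj⟩ := Finset.exists_mem_eq_sup Finset.univ ⟨j₀, Finset.mem_univ _⟩
    fun j => (M i j).natDegree
  by_cases hMj : M i j = 0
  · refine ⟨j₀, hj₀, le_antisymm (natDegree_le_rowDeg M i j₀) ?_⟩
    rw [rowDeg, hj, hMj, natDegree_zero]
    exact Nat.zero_le _
  · exact ⟨j, hMj, hj.symm⟩

theorem ratRow_ne_zero_iff : ratRow M i ≠ 0 ↔ M i ≠ 0 := by
  simp only [ne_eq, funext_iff, ratRow, Pi.zero_apply, map_eq_zero_iff _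
    (RatFunc.algebraMap_injective F)]

variable {M i} {u : F[X]}

theorem exists_ratRow_updateRow_smul_eq (hu : u ≠ 0) :
    ∃ w : Fin p → (RatFunc F)ˣ, ratRow (M.updateRow i (u • M i)) = w • ratRow M := by
  have hu' : algebraMap F[X] (RatFunc F) u ≠ 0 :=
    (map_ne_zero_iff _ (RatFunc.algebraMap_injective F)).mpr hu
  refine ⟨Function.update 1 i (Units.mk0 _ hu'), ?_⟩
  ext i' j
  rcases eq_or_ne i' i with rfl | hi'
  · simp [ratRow]
  · simp [ratRow, hi']

theorem natDegree_updateRow_smul_le {d : ℕ} (hM : ∀ i j, (M i j).natDegree ≤ d)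
    (hu : u.natDegree + rowDeg M i ≤ d) (i' : Fin p) (j : Fin q) :
    (M.updateRow i (u • M i) i' j).natDegree ≤ d := by
  rcases eq_or_ne i' i with rfl | hi'
  · rw [updateRow_self, Pi.smul_apply, smul_eq_mul]
    exact natDegree_mul_le.trans (by linarith [natDegree_le_rowDeg M i' j])
  · rw [updateRow_ne hi']
    exact hM i' j

theorem add_natDegree_le_rowDeg_updateRow_smul (hM : M i ≠ 0) (hu : u ≠ 0) :
    u.natDegree + rowDeg M i ≤ rowDeg (M.updateRow i (u • M i)) i := by
  obtain ⟨j, hj, hjdeg⟩ := exists_ne_zero_natDegree_eq_rowDeg M i hM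
  calc u.natDegree + rowDeg M i = (u * M i j).natDegree := by rw [natDegree_mul hu hj, hjdeg]
    _ ≤ _ := by simpa using natDegree_le_rowDeg (M.updateRow i (u • M i)) i j

theorem not_isMinimalBasis_updateRow_smul (hM : LinearIndependent (RatFunc F) (ratRow M))
    (hu : 0 < u.natDegree) : ¬ IsMinimalBasis (M.updateRow i (u • M i)) := by
  have hu0 : u ≠ 0 := ne_zero_of_natDegree_gt hu
  obtain ⟨w, hw⟩ := exists_ratRow_updateRow_smul_eq (M := M) (i := i) hu0
  rintro ⟨-, -, hmin⟩
  have hle := hmin M hM (by rw [rowSpan, rowSpan, hw, Submodule.span_range_units_smul])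
  have hrow : rowDeg M i < rowDeg (M.updateRow i (u • M i)) i :=
    (add_natDegree_le_rowDeg_updateRow_smul ((ratRow_ne_zero_iff M i).mp (hM.ne_zero i)) hu0)
      |>.trans_lt' (by omega)
  refine hle.not_gt (Finset.sum_lt_sum (fun i' _ => ?_) ⟨i, Finset.mem_univ _, hrow⟩)
  rcases eq_or_ne i' i with rfl | hi'
  · exact hrow.le
  · simp [rowDeg, updateRow_ne hi']

end RowOperations

theorem sylv_updateRow_add_smul {p q : ℕ} (e k : ℕ) (M : Matrix (Fin p) (Fin q) F[X])
    (i : Fin p) (c : F) (v : Fin q → F[X]) :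
    sylv e k (M.updateRow i (M i + c • v)) =
      sylv e k M + c • sylv e k ((0 : Matrix (Fin p) (Fin q) F[X]).updateRow i v) := by
  ext r col
  simp only [sylv, updateRow_apply, Matrix.add_apply, Matrix.smul_apply, smul_eq_mul]
  split_ifs <;> simp_all

theorem sNorm_neg {a b : Type*} [Fintype a] [Fintype b] [DecidableEq b] (A : Matrix a b 𝕜) :
    sNorm (-A) = sNorm A := by
  simp only [sNorm, map_neg, norm_neg]

theorem sNorm_smul {a b : Type*} [Fintype a] [Fintype b] [DecidableEq b] (c : 𝕜)
    (A : Matrix a b 𝕜) : sNorm (c • A) = ‖c‖ * sNorm A := by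
  simp only [sNorm, map_smul, norm_smul]

theorem not_robust_of_degree_lt_general {𝕜 : Type*} [RCLike 𝕜] {p q : ℕ}
    (hp : 0 < p)
    (M : Matrix (Fin p) (Fin q) 𝕜[X]) (hmb : IsMinimalBasis M)
    (d : ℕ) (hd : Finset.univ.sup (fun i => rowDeg M i) < d) :
    ∀ ε : ℝ, 0 < ε →
      ∃ M' : Matrix (Fin p) (Fin q) 𝕜[X],
        (∀ i j, (M' i j).natDegree ≤ d) ∧ ¬ IsMinimalBasis M' ∧
        sNorm (sylv d 1 M - sylv d 1 M') < ε := by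
  intro ε hε
  have hdeg : ∀ i, rowDeg M i < d := fun i => (Finset.le_sup (Finset.mem_univ i)).trans_lt hd
  set i : Fin p := ⟨0, hp⟩
  set s := d - rowDeg M i
  have hs : 0 < s ∧ s + rowDeg M i = d := by have := hdeg i; omega
  set N := (0 : Matrix (Fin p) (Fin q) 𝕜[X]).updateRow i ((X ^ s : 𝕜[X]) • M i)
  set K := sNorm (sylv d 1 N)
  set δ : ℝ := ε / (K + 1)
  have hK : 0 ≤ K := norm_nonneg _
  have hδ : 0 < δ := by positivity
  have hu : (C (δ : 𝕜) * X ^ s + 1).natDegree = s := by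
    rw [← C_1, natDegree_add_C, natDegree_C_mul_X_pow s (δ : 𝕜) (by exact_mod_cast hδ.ne')]
  have hscale : M i + (δ : 𝕜) • (X ^ s : 𝕜[X]) • M i = (C (δ : 𝕜) * X ^ s + 1) • M i := by
    rw [add_smul, one_smul, add_comm, ← smul_assoc, smul_eq_C_mul]
  refine ⟨M.updateRow i (M i + (δ : 𝕜) • (X ^ s : 𝕜[X]) • M i), ?_, ?_, ?_⟩
  · rw [hscale]
    exact natDegree_updateRow_smul_le
      (fun i j => (natDegree_le_rowDeg M i j).trans (hdeg i).le) (by rw [hu, hs.2])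
  · rw [hscale]
    exact not_isMinimalBasis_updateRow_smul hmb.1 (by rw [hu]; exact hs.1)
  · rw [sylv_updateRow_add_smul, sub_add_cancel_left, sNorm_neg, sNorm_smul,
      RCLike.norm_ofReal, abs_of_pos hδ]
    calc δ * K < δ * (K + 1) := by gcongr; linarith
      _ = ε := div_mul_cancel₀ ε (by positivity)

/-- Minimal bases are never robust under perturbations that may increase the degree:
if `d > deg(M)`, then arbitrarily close to `M` inside the space of polynomial
matrices of degree at most `d` there are matrices that are not minimal bases. -/
theorem not_robust_of_degree_lt {𝕜 : Type*} [RCLike 𝕜] {p q : ℕ}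
    (hp : 0 < p) (hpq : p < q)
    (M : Matrix (Fin p) (Fin q) 𝕜[X]) (hmb : IsMinimalBasis M)
    (d : ℕ) (hd : Finset.univ.sup (fun i => rowDeg M i) < d) :
    ∀ ε : ℝ, 0 < ε →
      ∃ M' : Matrix (Fin p) (Fin q) 𝕜[X],
        (∀ i j, (M' i j).natDegree ≤ d) ∧ ¬ IsMinimalBasis M' ∧
        sNorm (sylv d 1 M - sylv d 1 M') < ε :=
  not_robust_of_degree_lt_general hp M hmb d hd

end
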